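/- If x* is a weak Pareto minimum of bounded-below objectives (f_1, ..., f_r) on X and β_i* < inf_{x∈X} f_i(x) for each i, then x* minimizes max_i w_i (f_i(x) − β_i*) over X for the weights w_i = (f_i(x*) − β_i*)^{-1} / ∑_j (f_j(x*) − β_j*)^{-1}, which are positive and sum to 1. -/

import Mathlib

/-!
The weights are chosen so that every weighted gap `w i * (f i xs - β i)` equals the same
constant `(∑ j, (f j xs - β j)⁻¹)⁻¹`, which is therefore the Chebyshev value at `xs`. Any other
point `x` is, by weak Pareto minimality, no better than `xs` in some objective `i`, and the
`i`-th term alone already pushes its Chebyshev value up to that constant.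
-/

section ReciprocalWeights

variable {ι : Type*} [Fintype ι] {d : ι → ℝ}

lemma sum_inv_pos [Nonempty ι] (hd : ∀ i, 0 < d i) : 0 < ∑ j, (d j)⁻¹ :=
  Finset.sum_pos (fun j _ => inv_pos.mpr (hd j)) Finset.univ_nonempty

lemma inv_div_sum_inv_pos [Nonempty ι] (hd : ∀ i, 0 < d i) (i : ι) :
    0 < (d i)⁻¹ / ∑ j, (d j)⁻¹ :=
  div_pos (inv_pos.mpr (hd i)) (sum_inv_pos hd)

lemma sum_inv_div_sum_inv [Nonempty ι] (hd : ∀ i, 0 < d i) :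
    ∑ i, (d i)⁻¹ / ∑ j, (d j)⁻¹ = 1 := by
  rw [← Finset.sum_div, div_self (sum_inv_pos hd).ne']

lemma inv_div_sum_inv_mul_self {i : ι} (hi : d i ≠ 0) :
    (d i)⁻¹ / (∑ j, (d j)⁻¹) * d i = (∑ j, (d j)⁻¹)⁻¹ := by
  field_simp

end ReciprocalWeights

lemma Finset.sup'_mul_le_sup'_mul_of_const {ι : Type*} {s : Finset ι} (hs : s.Nonempty)
    {w a b : ι → ℝ} {c : ℝ} (hconst : ∀ i ∈ s, w i * a i = c) {i : ι} (hi : i ∈ s)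
    (hwi : 0 ≤ w i) (hab : a i ≤ b i) :
    s.sup' hs (fun j => w j * a j) ≤ s.sup' hs (fun j => w j * b j) :=
  calc s.sup' hs (fun j => w j * a j) = s.sup' hs (fun _ => c) := Finset.sup'_congr hs rfl hconst
    _ = w i * a i := by rw [Finset.sup'_const, hconst i hi]
    _ ≤ w i * b i := mul_le_mul_of_nonneg_left hab hwi
    _ ≤ s.sup' hs (fun j => w j * b j) := Finset.le_sup' (fun j => w j * b j) hi

theorem weak_pareto_chebyshev_utopia_general {X : Type*} {r : ℕ} (hr : 0 < r)
    (f : Fin r → X → ℝ) (β : Fin r → ℝ) (hβ : ∀ i (x : X), β i < f i x)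
    (xs : X) (hpar : ¬ ∃ x : X, ∀ i, f i x < f i xs)
    (w : Fin r → ℝ)
    (hw : ∀ i, w i = (f i xs - β i)⁻¹ / ∑ j, (f j xs - β j)⁻¹) :
    (∀ i, 0 < w i) ∧ (∑ i, w i = 1) ∧
    ∀ x : X,
      (Finset.univ.sup' (Finset.univ_nonempty_iff.mpr (Fin.pos_iff_nonempty.mp hr))
        fun i => w i * (f i xs - β i)) ≤
      Finset.univ.sup' (Finset.univ_nonempty_iff.mpr (Fin.pos_iff_nonempty.mp hr))
        fun i => w i * (f i x - β i) := by
  have : Nonempty (Fin r) := Fin.pos_iff_nonempty.mp hr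
  have hgap : ∀ i, 0 < f i xs - β i := fun i => sub_pos.mpr (hβ i xs)
  obtain rfl : w = fun i => (f i xs - β i)⁻¹ / ∑ j, (f j xs - β j)⁻¹ := funext hw
  refine ⟨inv_div_sum_inv_pos hgap, sum_inv_div_sum_inv hgap, fun x => ?_⟩
  simp only [not_exists, not_forall, not_lt] at hpar
  obtain ⟨i, hi⟩ := hpar x
  exact Finset.sup'_mul_le_sup'_mul_of_const _
    (fun j _ => inv_div_sum_inv_mul_self (d := fun k => f k xs - β k) (hgap j).ne')
    (Finset.mem_univ i)
    (inv_div_sum_inv_pos hgap i).le (sub_le_sub_right hi _)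

/-- If `xs` is a weak Pareto minimum of `(f 1,...,f r)` on `X`, with utopian values
`β i < f i x` for all `x ∈ X` and all `i`, then `xs` minimizes the weighted Chebyshev
function `max_i w i * (f i x - β i)` over `X` for the weights
`w i = (f i xs - β i)⁻¹ / ∑ j, (f j xs - β j)⁻¹`, which are positive and sum to 1. -/
theorem weak_pareto_chebyshev_utopia {X : Type*} [Nonempty X] {r : ℕ} (hr : 0 < r)
    (f : Fin r → X → ℝ) (β : Fin r → ℝ) (hβ : ∀ i (x : X), β i < f i x)
    (xs : X) (hpar : ¬ ∃ x : X, ∀ i, f i x < f i xs)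
    (w : Fin r → ℝ)
    (hw : ∀ i, w i = (f i xs - β i)⁻¹ / ∑ j, (f j xs - β j)⁻¹) :
    (∀ i, 0 < w i) ∧ (∑ i, w i = 1) ∧
    ∀ x : X,
      (Finset.univ.sup' (Finset.univ_nonempty_iff.mpr (Fin.pos_iff_nonempty.mp hr))
        fun i => w i * (f i xs - β i)) ≤
      Finset.univ.sup' (Finset.univ_nonempty_iff.mpr (Fin.pos_iff_nonempty.mp hr))
        fun i => w i * (f i x - β i) :=
  weak_pareto_chebyshev_utopia_general hr f β hβ xs hpar w hw
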